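/- Suppose a block s belongs to a ℘-node A (A ∈ Q) in a colored P-process, and s^{(•)} is infinite. Then A has a green target: there exists a place g ∈ T(A) \ F such that ℘*(⋃A^{(•)}) ∩ g^{(•)} is uncountably infinite; in particular g is green. (Here one uses that |℘*(A^{(•)})| > ℵ₀ when some block of A is infinite, that ℘*(A^{(•)}) ⊆ ⋃P^{(•)} for ℘-nodes, that P is finite, and that red places are finite.) -/

import Mathlib

/-- The image of a ZF-set under an arbitrary function (classically definable). -/
noncomputable def zImage (f : ZFSet → ZFSet) (X : ZFSet) : ZFSet :=
  @ZFSet.image f (Classical.allZFSetDefinable fun s => f (s 0)) X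

/-- `℘*(X) = { Y : Y ⊆ ⋃X ∧ ∀ z ∈ X, z ∩ Y ≠ ∅ }` for ZF-sets. -/
def zPowast (X : ZFSet) : ZFSet :=
  ZFSet.sep (fun Y => ∀ z ∈ X, z ∩ Y ≠ ∅) (ZFSet.powerset (ZFSet.sUnion X))

/-- A formative process: to each place `q` in the ZF-set `P` of places and each
ordinal `μ ≤ xi` is assigned a block `blk q μ`, pairwise disjoint at each stage,
increasing at successors, continuous at limits, empty at `0` and nonempty at `xi`. -/
structure FormativeProcess where
  P : ZFSet
  xi : Ordinal
  blk : ZFSet → Ordinal → ZFSet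
  disj : ∀ p ∈ P, ∀ q ∈ P, p ≠ q → ∀ μ ≤ xi, blk p μ ∩ blk q μ = (∅ : ZFSet)
  mono : ∀ q ∈ P, ∀ ν < xi, blk q ν ⊆ blk q (ν + 1)
  limitc : ∀ q ∈ P, ∀ lam ≤ xi, Order.IsSuccLimit lam →
    ∀ x : ZFSet, x ∈ blk q lam ↔ ∃ ν < lam, x ∈ blk q ν
  init : ∀ q ∈ P, blk q 0 = (∅ : ZFSet)
  final_ne : ∀ q ∈ P, blk q xi ≠ (∅ : ZFSet)

/-- `⋃P^(ν)`, the union of all blocks at stage `ν`. -/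
noncomputable def FormativeProcess.stage (F : FormativeProcess) (ν : Ordinal) : ZFSet :=
  ZFSet.sUnion (zImage (fun q => F.blk q ν) F.P)

/-- `⋃A^(•)`, the union of the final blocks of the places in the node `A`. -/
noncomputable def FormativeProcess.nodeUnion (F : FormativeProcess) (A : ZFSet) : ZFSet :=
  ZFSet.sUnion (zImage (fun q => F.blk q F.xi) A)

open Classical in
/-- The grand event of a node `A`: the stage `ν < xi` at which `⋃A^(•)` appears,
if any exists, and `xi` otherwise. -/
noncomputable def FormativeProcess.GE (F : FormativeProcess) (A : ZFSet) : Ordinal :=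
  if h : ∃ ν, ν < F.xi ∧ F.nodeUnion A ∈ F.stage (ν + 1) ∧ F.nodeUnion A ∉ F.stage ν
  then h.choose else F.xi

/-! Since the final blocks are pairwise disjoint and nonempty, every nonempty subset `T` of the
infinite block `s^(•)` extends, by adding all of `⋃A^(•) \ s^(•)`, to a distinct member of
`℘*(A^(•))`; hence `℘*(A^(•))` has at least `2^|s^(•)| > ℵ₀` elements. For a ℘-node these all lie
in the finitely many final blocks, so one block meets `℘*(A^(•))` uncountably; it cannot be red,
as red blocks are finite. -/

theorem Set.Infinite.not_countable_powerset {α : Type*} {s : Set α} (hs : s.Infinite) :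
    ¬ (𝒫 s).Countable := by
  rw [← Cardinal.le_aleph0_iff_set_countable, Cardinal.mk_powerset, not_le]
  have : Infinite s := hs.to_subtype
  exact (Cardinal.aleph0_le_mk s).trans_lt (Cardinal.cantor _)

theorem Set.exists_not_countable_inter_of_subset_biUnion {ι α : Type*} {I : Set ι}
    (hI : I.Countable) {S : Set α} {f : ι → Set α} (hS : ¬ S.Countable)
    (hcover : S ⊆ ⋃ i ∈ I, f i) : ∃ i ∈ I, ¬ (S ∩ f i).Countable := by
  by_contra! h
  refine hS ((hI.biUnion h).mono fun x hx => ?_)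
  obtain ⟨i, hi, hxi⟩ := Set.mem_iUnion₂.1 (hcover hx)
  exact Set.mem_biUnion hi ⟨hx, hxi⟩

theorem mem_zImage {f : ZFSet → ZFSet} {X y : ZFSet} :
    y ∈ zImage f X ↔ ∃ z ∈ X, f z = y :=
  @ZFSet.mem_image f (Classical.allZFSetDefinable fun s => f (s 0)) X y

theorem mem_zPowast {X Y : ZFSet} : Y ∈ zPowast X ↔ Y ⊆ X.sUnion ∧ ∀ z ∈ X, z ∩ Y ≠ ∅ := by
  rw [zPowast, ZFSet.mem_sep, ZFSet.mem_powerset]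

noncomputable def zFillOutside (X z : ZFSet) (T : Set ZFSet) : ZFSet :=
  ZFSet.sep (fun x => x ∈ T ∨ x ∉ z) X.sUnion

section zFillOutside

variable {X z : ZFSet} {T : Set ZFSet}

theorem coe_zFillOutside_inter (hz : z ∈ X) (hT : T ⊆ z) :
    (zFillOutside X z T : Set ZFSet) ∩ z = T := by
  ext x
  simp only [zFillOutside, ZFSet.coe_sep, Set.mem_inter_iff, Set.mem_ofPred_eq, SetLike.mem_coe]
  constructor
  · rintro ⟨⟨-, hx | hx⟩, hxz⟩
    exacts [hx, absurd hxz hx]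
  · intro hx
    exact ⟨⟨ZFSet.mem_sUnion_of_mem (hT hx) hz, Or.inl hx⟩, hT hx⟩

theorem zFillOutside_mem_zPowast (hX : ∀ w ∈ X, w ≠ z → ¬ w ⊆ z)
    (hTz : T ⊆ z) (hT : T.Nonempty) : zFillOutside X z T ∈ zPowast X := by
  refine mem_zPowast.2 ⟨ZFSet.sep_subset, fun w hw hempty => ?_⟩
  have witness : ∃ x ∈ w, x ∈ T ∨ x ∉ z := by
    by_cases hwz : w = z
    · obtain ⟨t, ht⟩ := hT
      exact ⟨t, hwz ▸ hTz ht, Or.inl ht⟩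
    · obtain ⟨x, hxw, hxz⟩ := Set.not_subset.1 (hX w hw hwz)
      exact ⟨x, hxw, Or.inr hxz⟩
  obtain ⟨x, hxw, hx⟩ := witness
  have : x ∈ w ∩ zFillOutside X z T :=
    ZFSet.mem_inter.2 ⟨hxw, ZFSet.mem_sep.2 ⟨ZFSet.mem_sUnion_of_mem hxw hw, hx⟩⟩
  exact ZFSet.notMem_empty x (hempty ▸ this)

end zFillOutside

theorem not_countable_zPowast {X z : ZFSet} (hz : z ∈ X) (hX : ∀ w ∈ X, w ≠ z → ¬ w ⊆ z)
    (hzinf : (z : Set ZFSet).Infinite) : ¬ (zPowast X : Set ZFSet).Countable := by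
  intro hcount
  have hmaps : Set.MapsTo (zFillOutside X z) (𝒫 z)
      (insert (zFillOutside X z ∅) (zPowast X : Set ZFSet)) := by
    intro T hTz
    rcases T.eq_empty_or_nonempty with rfl | hT
    · exact Set.mem_insert _ _
    · exact Set.mem_insert_of_mem _ (zFillOutside_mem_zPowast hX hTz hT)
  have hinj : Set.InjOn (zFillOutside X z) (𝒫 z) := fun T₁ hT₁ T₂ hT₂ h => by
    rw [← coe_zFillOutside_inter hz hT₁, ← coe_zFillOutside_inter hz hT₂, h]
  exact hzinf.not_countable_powerset (hmaps.countable_of_injOn hinj (hcount.insert _))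

namespace FormativeProcess

variable (F : FormativeProcess)

theorem mem_stage {ν : Ordinal} {Y : ZFSet} : Y ∈ F.stage ν ↔ ∃ q ∈ F.P, Y ∈ F.blk q ν := by
  simp only [stage, ZFSet.mem_sUnion, mem_zImage]
  constructor
  · rintro ⟨_, ⟨q, hq, rfl⟩, hY⟩
    exact ⟨q, hq, hY⟩
  · rintro ⟨q, hq, hY⟩
    exact ⟨_, ⟨q, hq, rfl⟩, hY⟩

theorem not_blk_final_subset {p q : ZFSet} (hp : p ∈ F.P) (hq : q ∈ F.P) (hpq : p ≠ q) :
    ¬ F.blk p F.xi ⊆ F.blk q F.xi := by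
  intro hsub
  obtain ⟨x, hx⟩ := (ZFSet.eq_empty_or_nonempty _).resolve_left (F.final_ne p hp)
  have : x ∈ F.blk p F.xi ∩ F.blk q F.xi := ZFSet.mem_inter.2 ⟨hx, hsub hx⟩
  exact ZFSet.notMem_empty x (F.disj p hp q hq hpq F.xi le_rfl ▸ this)

end FormativeProcess

/-- If a block `s` belonging to a ℘-node `A` becomes infinite in a colored process
(finite place set, red places have finite blocks, ℘-nodes satisfy
`℘*(A^(•)) ⊆ ⋃P^(•)`), then `A` has a green target: a place `g ∈ P` outside the red
set `Fred` such that `℘*(A^(•)) ∩ g^(•)` is uncountable (in particular nonempty, so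
`g` is a target of `A`). -/
theorem green_target_of_infinite_block (F : FormativeProcess)
    (hPfin : F.P.toSet.Finite)
    (Fred : ZFSet) (hFred : ∀ q ∈ Fred, q ∈ F.P ∧ (F.blk q F.xi).toSet.Finite)
    (Q : Set ZFSet) (hQsub : ∀ B ∈ Q, B ⊆ F.P)
    (hQpow : ∀ B ∈ Q, zPowast (zImage (fun q => F.blk q F.xi) B) ⊆ F.stage F.xi)
    (A : ZFSet) (hAQ : A ∈ Q) (s : ZFSet) (hs : s ∈ A)
    (hinf : (F.blk s F.xi).toSet.Infinite) :
    ∃ g : ZFSet, g ∈ F.P ∧ g ∉ Fred ∧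
      (zPowast (zImage (fun q => F.blk q F.xi) A) ∩ F.blk g F.xi ≠ (∅ : ZFSet)) ∧
      ¬ (zPowast (zImage (fun q => F.blk q F.xi) A) ∩ F.blk g F.xi).toSet.Countable := by
  set S := zPowast (zImage (fun q => F.blk q F.xi) A)
  have hAP := hQsub A hAQ
  have hS : ¬ (S : Set ZFSet).Countable := by
    refine not_countable_zPowast (mem_zImage.2 ⟨s, hs, rfl⟩) ?_ hinf
    rintro _ hw hne
    obtain ⟨q, hq, rfl⟩ := mem_zImage.1 hw
    exact F.not_blk_final_subset (hAP hq) (hAP hs) (by rintro rfl; exact hne rfl)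
  have hcover : (S : Set ZFSet) ⊆ ⋃ q ∈ (F.P : Set ZFSet), F.blk q F.xi := fun Y hY => by
    obtain ⟨q, hq, hYq⟩ := F.mem_stage.1 (hQpow A hAQ hY)
    exact Set.mem_biUnion hq hYq
  obtain ⟨g, hgP, hg⟩ := Set.exists_not_countable_inter_of_subset_biUnion hPfin.countable hS hcover
  refine ⟨g, hgP, fun hgF => hg ?_, fun hempty => hg ?_, by rw [← ZFSet.coe_inter] at hg; exact hg⟩
  · exact ((hFred g hgF).2.subset Set.inter_subset_right).countable
  · rw [← ZFSet.coe_inter, hempty, ZFSet.coe_empty]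
    exact Set.countable_empty
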